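/- arXiv:2305.03412 — 6 statements merged into one kernel-verified Lean document; each statement's English description precedes it below -/
import Mathlib

section
/- Let G be a d-connected graph and let S and T be d-separators of G (i.e., vertex sets of size d whose removal disconnects G). Then the following are equivalent: (a) S contains vertices from at least two components of G−T; (b) T contains a vertex from each component of G−S; (c) T contains vertices from at least two components of G−S; (d) S contains a vertex from each component of G−T. -/
variable {V : Type*}

/-- `u` and `v` lie in the same component of `G − S`. -/
def ReachOutside (G : SimpleGraph V) (S : Set V) (u v : V) : Prop :=
  ∃ (hu : u ∈ Sᶜ) (hv : v ∈ Sᶜ), (G.induce Sᶜ).Reachable ⟨u, hu⟩ ⟨v, hv⟩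

/-- `S` is a separator of `G`: `G − S` is disconnected. -/
def IsSeparator (G : SimpleGraph V) (S : Set V) : Prop :=
  ∃ u v, u ∉ S ∧ v ∉ S ∧ ¬ ReachOutside G S u v

/-- `S` is a `d`-separator of `G`. -/
def IsdSeparator (G : SimpleGraph V) (d : ℕ) (S : Set V) : Prop :=
  S.ncard = d ∧ IsSeparator G S

/-- `S` separates `u` from `v` in `G`. -/
def SeparatesPair (G : SimpleGraph V) (S : Set V) (u v : V) : Prop :=
  u ∉ S ∧ v ∉ S ∧ ¬ ReachOutside G S u v

/-- `S` crosses `T`: `S` contains vertices of at least two components of `G − T`. -/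
def Crosses (G : SimpleGraph V) (S T : Set V) : Prop :=
  ∃ s₁ s₂, s₁ ∈ S ∧ s₂ ∈ S ∧ s₁ ∉ T ∧ s₂ ∉ T ∧ ¬ ReachOutside G T s₁ s₂

def Noncrossing (G : SimpleGraph V) (S T : Set V) : Prop :=
  ¬ Crosses G S T ∧ ¬ Crosses G T S

/-- `G` is `d`-connected. -/
def dConnected [Fintype V] (G : SimpleGraph V) (d : ℕ) : Prop :=
  d + 1 ≤ Fintype.card V ∧ ∀ S : Set V, S.ncard < d → ¬ IsSeparator G S

/-- the neighbours of `X` outside `X`. -/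
def nbhd (G : SimpleGraph V) (X : Set V) : Set V :=
  {v | v ∉ X ∧ ∃ x ∈ X, G.Adj x v}

/-- the complement `V − X − N_G(X)` of a fragment. -/
def fragCompl (G : SimpleGraph V) (X : Set V) : Set V :=
  (X ∪ nbhd G X)ᶜ

/-- `X` is a `d`-fragment of `G`. -/
def IsFragment (G : SimpleGraph V) (d : ℕ) (X : Set V) : Prop :=
  X.Nonempty ∧ (nbhd G X).ncard = d ∧ (fragCompl G X).Nonempty

/-- the fragment `X` is `(u,v)`-separating. -/
def FragSeparates (G : SimpleGraph V) (X : Set V) (u v : V) : Prop :=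
  (u ∈ X ∧ v ∈ fragCompl G X) ∨ (v ∈ X ∧ u ∈ fragCompl G X)

/-- there exist `k` pairwise internally disjoint `u`–`v` paths in `G`. -/
def HasIntDisjPaths (G : SimpleGraph V) (u v : V) (k : ℕ) : Prop :=
  ∃ f : Fin k → G.Path u v, Function.Injective f ∧
    ∀ i j, i ≠ j → ∀ x, x ∈ (f i).1.support → x ∈ (f j).1.support → x = u ∨ x = v

/-- `κ(G,u,v)`: the maximum number of pairwise internally disjoint `u`–`v` paths. -/
noncomputable def localConn (G : SimpleGraph V) (u v : V) : ℕ :=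
  sSup {k | HasIntDisjPaths G u v k}

/-! A component `C` of `G − S` has `N(C) ⊆ S`, and `N(C)` still separates `C` from the rest of
`G − S`; if `G` is `d`-connected and `|S| = d`, this forces `N(C) = S`, so every vertex of `S`
has a neighbour in every component of `G − S`. Now if `S` crosses `T` but some component `C` of
`G − S` avoids `T`, then `C` is connected in `G − T` and adjacent to every vertex of `S`, so it
joins any two vertices of `S − T` in `G − T`, a contradiction. Conversely, if `T` meets every
component of `G − S`, then it meets the two components that witness `S` being a separator. -/

open SimpleGraph

/-- `T` contains a vertex of each component of `G − S`. -/
def MeetsAllComponents (G : SimpleGraph V) (T S : Set V) : Prop :=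
  ∀ w, w ∉ S → ∃ t ∈ T, t ∉ S ∧ ReachOutside G S t w

def componentOutside (G : SimpleGraph V) (S : Set V) (w : V) : Set V :=
  {v | ReachOutside G S v w}

namespace ReachOutside

variable {G : SimpleGraph V} {S T : Set V} {u v w : V}

lemma refl (hu : u ∉ S) : ReachOutside G S u u :=
  ⟨hu, hu, Reachable.refl _⟩

lemma symm (h : ReachOutside G S u v) : ReachOutside G S v u :=
  let ⟨hu, hv, h⟩ := h
  ⟨hv, hu, h.symm⟩

lemma trans (h₁ : ReachOutside G S u v) (h₂ : ReachOutside G S v w) : ReachOutside G S u w :=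
  let ⟨hu, _, h₁⟩ := h₁
  let ⟨_, hw, h₂⟩ := h₂
  ⟨hu, hw, h₁.trans h₂⟩

lemma of_adj (hu : u ∉ S) (hv : v ∉ S) (hadj : G.Adj u v) : ReachOutside G S u v :=
  ⟨hu, hv, Adj.reachable (G := G.induce Sᶜ) (u := ⟨u, hu⟩) (v := ⟨v, hv⟩) hadj⟩

lemma trans_adj (h : ReachOutside G S u v) (hw : w ∉ S) (hadj : G.Adj v w) :
    ReachOutside G S u w :=
  h.trans (of_adj h.2.1 hw hadj)

lemma mem_of_closed {C : Set V} (h : ReachOutside G S u v) (hu : u ∈ C)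
    (hC : ∀ x y, x ∈ C → y ∉ S → G.Adj x y → y ∈ C) : v ∈ C := by
  obtain ⟨hu', hv', ⟨p⟩⟩ := h
  suffices ∀ (x z : ↥Sᶜ), (G.induce Sᶜ).Walk x z → (x : V) ∈ C → (z : V) ∈ C from
    this ⟨u, hu'⟩ ⟨v, hv'⟩ p hu
  intro x z p
  induction p with
  | nil => exact id
  | @cons _ y _ hxy _ ih => exact fun hx => ih (hC _ _ hx y.2 hxy)

lemma of_componentOutside_disjoint (h : ReachOutside G S u v)
    (hT : ∀ x, ReachOutside G S u x → x ∉ T) : ReachOutside G T u v :=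
  (h.mem_of_closed (C := {x | ReachOutside G S u x ∧ ReachOutside G T u x})
    ⟨refl h.1, refl (hT u (refl h.1))⟩
    fun _ _ hx hy hadj =>
      have hSy := hx.1.trans_adj hy hadj
      ⟨hSy, hx.2.trans_adj (hT _ hSy) hadj⟩).2

end ReachOutside

section Components

variable {G : SimpleGraph V} {S : Set V} {w : V}

lemma componentOutside_closed {x y : V} (hx : x ∈ componentOutside G S w) (hy : y ∉ S)
    (hadj : G.Adj x y) : y ∈ componentOutside G S w :=
  (ReachOutside.of_adj hy hx.1 hadj.symm).trans hx

lemma nbhd_componentOutside_subset : nbhd G (componentOutside G S w) ⊆ S :=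
  fun _ hy => by_contra fun hyS =>
    let ⟨hyC, _, hx, hadj⟩ := hy
    hyC (componentOutside_closed hx hyS hadj)

lemma isSeparator_nbhd_componentOutside (hS : IsSeparator G S) (hw : w ∉ S) :
    IsSeparator G (nbhd G (componentOutside G S w)) := by
  obtain ⟨u, v, hu, hv, huv⟩ := hS
  have hwC : w ∈ componentOutside G S w := ReachOutside.refl hw
  obtain ⟨x, hxS, hxC⟩ : ∃ x, x ∉ S ∧ x ∉ componentOutside G S w := by
    by_contra! h
    exact huv ((h u hu).trans (h v hv).symm)
  refine ⟨w, x, fun h => h.1 hwC, fun h => hxS (nbhd_componentOutside_subset h), fun h => hxC ?_⟩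
  exact h.mem_of_closed hwC fun a b ha hb hadj => by_contra fun hbC => hb ⟨hbC, a, ha, hadj⟩

lemma nbhd_componentOutside_eq [Fintype V] {d : ℕ} (hG : dConnected G d)
    (hS : IsdSeparator G d S) (hw : w ∉ S) : nbhd G (componentOutside G S w) = S := by
  refine Set.eq_of_subset_of_ncard_le nbhd_componentOutside_subset ?_
  rw [hS.1]
  exact not_lt.1 fun h => hG.2 _ h (isSeparator_nbhd_componentOutside hS.2 hw)

end Components

lemma MeetsAllComponents.crosses {G : SimpleGraph V} {S T : Set V} (hS : IsSeparator G S)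
    (hmeet : MeetsAllComponents G T S) : Crosses G T S := by
  obtain ⟨u, v, hu, hv, huv⟩ := hS
  obtain ⟨t₁, ht₁T, ht₁S, h₁⟩ := hmeet u hu
  obtain ⟨t₂, ht₂T, ht₂S, h₂⟩ := hmeet v hv
  exact ⟨t₁, t₂, ht₁T, ht₂T, ht₁S, ht₂S, fun h => huv ((h₁.symm.trans h).trans h₂)⟩

lemma Crosses.meetsAllComponents [Fintype V] {G : SimpleGraph V} {d : ℕ} {S T : Set V}
    (hG : dConnected G d) (hS : IsdSeparator G d S) (hcr : Crosses G S T) :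
    MeetsAllComponents G T S := by
  intro w hw
  by_contra! hC
  obtain ⟨s₁, s₂, hs₁S, hs₂S, hs₁T, hs₂T, hsep⟩ := hcr
  have hCT : ∀ v ∈ componentOutside G S w, v ∉ T := fun v hv hvT => hC v hvT hv.1 hv
  have hnbhd : ∀ s ∈ S, ∃ x ∈ componentOutside G S w, G.Adj s x := by
    intro s hs
    rw [← nbhd_componentOutside_eq hG hS hw] at hs
    obtain ⟨-, x, hx, hadj⟩ := hs
    exact ⟨x, hx, hadj.symm⟩
  obtain ⟨x₁, hx₁, hadj₁⟩ := hnbhd s₁ hs₁S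
  obtain ⟨x₂, hx₂, hadj₂⟩ := hnbhd s₂ hs₂S
  have hx₁₂ : ReachOutside G T x₁ x₂ :=
    (hx₁.trans hx₂.symm).of_componentOutside_disjoint fun x hx => hCT x (hx.symm.trans hx₁)
  exact hsep (((ReachOutside.of_adj hs₁T (hCT x₁ hx₁) hadj₁).trans hx₁₂).trans_adj hs₂T
    hadj₂.symm)

theorem stmt0 [Fintype V] (G : SimpleGraph V) (d : ℕ) (hG : dConnected G d)
    (S T : Set V) (hS : IsdSeparator G d S) (hT : IsdSeparator G d T) :
    (Crosses G S T ↔ (∀ w, w ∉ S → ∃ t ∈ T, t ∉ S ∧ ReachOutside G S t w)) ∧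
    (Crosses G S T ↔ Crosses G T S) ∧
    (Crosses G S T ↔ (∀ w, w ∉ T → ∃ s ∈ S, s ∉ T ∧ ReachOutside G T s w)) := by
  have ab : Crosses G S T → MeetsAllComponents G T S := Crosses.meetsAllComponents hG hS
  have bc : MeetsAllComponents G T S → Crosses G T S := MeetsAllComponents.crosses hS.2
  have cd : Crosses G T S → MeetsAllComponents G S T := Crosses.meetsAllComponents hG hT
  have da : MeetsAllComponents G S T → Crosses G S T := MeetsAllComponents.crosses hT.2
  exact ⟨⟨ab, da ∘ cd ∘ bc⟩, ⟨bc ∘ ab, da ∘ cd⟩, ⟨cd ∘ bc ∘ ab, da⟩⟩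
end

section
/- Let k ≥ 2 and let S_1 ⪰ S_2 ⪰ … ⪰ S_k be a chain of (u,v)-separating d-separators of a d-connected graph G, where S_i ⪰ S_{i+1} means S_{i+1} − S_i lies in the same component of G − S_i as u. If S_{k-1} ≠ S_k, then S_k − (S_1 ∪ … ∪ S_{k-1}) is nonempty. -/
variable {V : Type*}

section Aux

variable {G : SimpleGraph V} {S T : Set V} {a b c u v : V}

private lemma walk_lift : ∀ {a b : V} (w : G.Walk a b), (∀ x ∈ w.support, x ∉ S) →
    ∀ (ha : a ∈ Sᶜ) (hb : b ∈ Sᶜ), (G.induce Sᶜ).Reachable ⟨a, ha⟩ ⟨b, hb⟩ := by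
  intro a b w
  induction w with
  | nil => intro h ha hb; exact SimpleGraph.Reachable.refl _
  | @cons a c b hadj p ih =>
    intro h ha hb
    have hc : c ∈ Sᶜ := h c (by simp)
    have h1 : (G.induce Sᶜ).Adj ⟨a, ha⟩ ⟨c, hc⟩ := by simpa using hadj
    exact h1.reachable.trans (ih (fun x hx => h x (by simp [hx])) hc hb)

private lemma RO_iff : ReachOutside G S a b ↔ ∃ w : G.Walk a b, ∀ x ∈ w.support, x ∉ S := by
  constructor
  · rintro ⟨ha, hb, ⟨p⟩⟩
    refine ⟨p.map (SimpleGraph.Embedding.induce Sᶜ).toHom, ?_⟩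
    intro x hx
    change x ∈ (p.map (SimpleGraph.Embedding.induce Sᶜ).toHom).support at hx
    rw [SimpleGraph.Walk.support_map, List.mem_map] at hx
    obtain ⟨y, -, rfl⟩ := hx
    exact y.2
  · rintro ⟨w, h⟩
    have ha : a ∈ Sᶜ := h a w.start_mem_support
    have hb : b ∈ Sᶜ := h b w.end_mem_support
    exact ⟨ha, hb, walk_lift w h ha hb⟩

private lemma RO_refl (ha : a ∉ S) : ReachOutside G S a a :=
  ⟨ha, ha, SimpleGraph.Reachable.refl _⟩

private lemma RO_symm (h : ReachOutside G S a b) : ReachOutside G S b a := by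
  obtain ⟨ha, hb, h⟩ := h; exact ⟨hb, ha, h.symm⟩

private lemma RO_trans (h : ReachOutside G S a b) (h' : ReachOutside G S b c) :
    ReachOutside G S a c := by
  obtain ⟨ha, hb, h⟩ := h; obtain ⟨hb', hc, h'⟩ := h'
  exact ⟨ha, hc, h.trans h'⟩

private lemma RO_cons (hadj : G.Adj a b) (ha : a ∉ S) (h : ReachOutside G S b c) :
    ReachOutside G S a c := by
  obtain ⟨hb, hc, h⟩ := h
  have h1 : (G.induce Sᶜ).Adj ⟨a, ha⟩ ⟨b, hb⟩ := by simpa using hadj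
  exact ⟨ha, hc, h1.reachable.trans h⟩

private lemma RO_of_support (w : G.Walk a b) (h : ∀ x ∈ w.support, x ∉ S)
    (hx : c ∈ w.support) : ReachOutside G S c b := by
  classical
  exact RO_iff.mpr ⟨w.dropUntil c hx, fun y hy => h y (w.support_dropUntil_subset hx hy)⟩

/-- step lemma for minimality: walks avoiding `S \ {s}`. -/
private lemma Wstep (s : V) : ∀ {a b : V} (w : G.Walk a b), b ∉ S →
    (∀ x ∈ w.support, x ∉ S \ {s}) →
    (a ∉ S ∧ ReachOutside G S a b) ∨ ∃ x, G.Adj s x ∧ x ∉ S ∧ ReachOutside G S x b := by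
  intro a b w
  induction w with
  | nil => intro hb _; exact Or.inl ⟨hb, RO_refl hb⟩
  | @cons a c b hadj p ih =>
    intro hb h
    rcases ih hb (fun x hx => h x (by simp [hx])) with ⟨hcS, hRc⟩ | hr
    · by_cases has : a = s
      · subst has; exact Or.inr ⟨c, hadj, hcS, hRc⟩
      · have haS : a ∉ S := by
          have := h a (by simp)
          simp only [Set.mem_diff, Set.mem_singleton_iff, not_and, not_not] at this
          intro hmem; exact has (this hmem)
        exact Or.inl ⟨haS, RO_cons hadj haS hRc⟩
    · exact Or.inr hr

/-- every vertex of a minimum `(u,v)`-separator has a neighbour in the `v`-side. -/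
private lemma min_sep_nbr [Fintype V] {d : ℕ} (hG : dConnected G d)
    (hS : IsdSeparator G d S) (hsep : SeparatesPair G S u v) {s : V} (hs : s ∈ S) :
    ∃ x, G.Adj s x ∧ x ∉ S ∧ ReachOutside G S x v := by
  by_contra hcon
  push_neg at hcon
  have hfin : S.Finite := Set.toFinite S
  have hd : 1 ≤ d := by
    rw [← hS.1]
    exact (Set.ncard_pos hfin).mpr ⟨s, hs⟩
  have hsep' : ¬ ReachOutside G (S \ {s}) u v := by
    rintro hR
    obtain ⟨w, hw⟩ := RO_iff.mp hR
    rcases Wstep s w hsep.2.1 hw with ⟨-, hR'⟩ | ⟨x, hx1, hx2, hx3⟩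
    · exact hsep.2.2 hR'
    · exact (hcon x hx1 hx2) hx3
  have hIs : IsSeparator G (S \ {s}) :=
    ⟨u, v, fun h => hsep.1 h.1, fun h => hsep.2.1 h.1, hsep'⟩
  have hcard : (S \ {s}).ncard < d := by
    rw [Set.ncard_diff_singleton_of_mem hs, hS.1]; omega
  exact hG.2 _ hcard hIs

/-- if `T − S` lies on the `u`-side of `S`, then `S − T` lies on the `v`-side of `T`. -/
private lemma keyL1 [Fintype V] {d : ℕ} (hG : dConnected G d)
    (hS : IsdSeparator G d S) (hSsep : SeparatesPair G S u v)
    (hTS : ∀ w ∈ T \ S, ReachOutside G S w u) {s : V} (hs : s ∈ S \ T) :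
    ReachOutside G T s v := by
  obtain ⟨x, hadj, hxS, hxv⟩ := min_sep_nbr hG hS hSsep hs.1
  obtain ⟨w, hw⟩ := RO_iff.mp hxv
  have hwT : ∀ y ∈ w.support, y ∉ T := by
    intro y hy hyT
    have hyS : y ∉ S := hw y hy
    have h1 : ReachOutside G S y u := hTS y ⟨hyT, hyS⟩
    have h2 : ReachOutside G S y v := RO_of_support w hw hy
    exact hSsep.2.2 (RO_trans (RO_symm h1) h2)
  exact RO_cons hadj hs.2 (RO_iff.mpr ⟨w, hwT⟩)

/-- monotonicity of `v`-sides along the chain. -/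
private lemma keyL2 (hSsep : SeparatesPair G S u v)
    (hTS : ∀ w ∈ T \ S, ReachOutside G S w u) {x : V}
    (hx : ReachOutside G S x v) : ReachOutside G T x v := by
  obtain ⟨w, hw⟩ := RO_iff.mp hx
  have hwT : ∀ y ∈ w.support, y ∉ T := by
    intro y hy hyT
    have hyS : y ∉ S := hw y hy
    have h1 : ReachOutside G S y u := hTS y ⟨hyT, hyS⟩
    have h2 : ReachOutside G S y v := RO_of_support w hw hy
    exact hSsep.2.2 (RO_trans (RO_symm h1) h2)
  exact RO_iff.mpr ⟨w, hwT⟩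

end Aux


theorem stmt2 [Fintype V] (G : SimpleGraph V) (d : ℕ) (u v : V) (hG : dConnected G d)
    (k : ℕ) (hk : 2 ≤ k) (S : Fin k → Set V)
    (hsep : ∀ i, IsdSeparator G d (S i) ∧ SeparatesPair G (S i) u v)
    (hchain : ∀ (i : ℕ) (h : i + 1 < k),
      ∀ w ∈ S ⟨i + 1, h⟩ \ S ⟨i, by omega⟩, ReachOutside G (S ⟨i, by omega⟩) w u)
    (hne : S ⟨k - 2, by omega⟩ ≠ S ⟨k - 1, by omega⟩) :
    (S ⟨k - 1, by omega⟩ \ ⋃ (i : Fin k) (_ : i.val < k - 1), S i).Nonempty := by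
  have hk2 : k - 2 < k := by omega
  have hk1 : k - 1 < k := by omega
  obtain ⟨w, hwB, hwA⟩ : (S ⟨k - 1, hk1⟩ \ S ⟨k - 2, hk2⟩).Nonempty := by
    rw [Set.diff_nonempty]
    intro hsub
    have h1 : (S ⟨k - 2, hk2⟩).ncard ≤ (S ⟨k - 1, hk1⟩).ncard := by
      rw [(hsep ⟨k - 2, hk2⟩).1.1, (hsep ⟨k - 1, hk1⟩).1.1]
    exact hne (Set.eq_of_subset_of_ncard_le hsub h1 (Set.toFinite _)).symm
  have mono : ∀ t : ℕ, ∀ m : ℕ, (hm : m + t = k - 2) → ∀ x : V,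
      ReachOutside G (S ⟨m, by omega⟩) x v → ReachOutside G (S ⟨k - 2, hk2⟩) x v := by
    intro t
    induction t with
    | zero =>
      intro m hm x hx
      have hme : m = k - 2 := by omega
      subst hme; exact hx
    | succ t ih =>
      intro m hm x hx
      have h1 : m + 1 < k := by omega
      have hx' : ReachOutside G (S ⟨m + 1, h1⟩) x v :=
        keyL2 (hsep ⟨m, by omega⟩).2 (hchain m h1) hx
      exact ih (m + 1) (by omega) x hx'
  have claim : ∀ t : ℕ, ∀ m : ℕ, (hm : m + t = k - 2) → w ∈ S ⟨m, by omega⟩ →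
      w ∈ S ⟨k - 2, hk2⟩ ∨ ReachOutside G (S ⟨k - 2, hk2⟩) w v := by
    intro t
    induction t with
    | zero =>
      intro m hm hw
      have hme : m = k - 2 := by omega
      subst hme; exact Or.inl hw
    | succ t ih =>
      intro m hm hw
      have h1 : m + 1 < k := by omega
      by_cases hw1 : w ∈ S ⟨m + 1, h1⟩
      · exact ih (m + 1) (by omega) hw1
      · refine Or.inr ?_
        have hRv : ReachOutside G (S ⟨m + 1, h1⟩) w v :=
          keyL1 hG (hsep ⟨m, by omega⟩).1 (hsep ⟨m, by omega⟩).2 (hchain m h1) ⟨hw, hw1⟩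
        exact mono t (m + 1) (by omega) w hRv
  have hnotin : ∀ j : ℕ, (hj : j < k - 1) → w ∉ S ⟨j, by omega⟩ := by
    intro j hj hwj
    have hj2 : j ≤ k - 2 := by omega
    rcases claim (k - 2 - j) j (by omega) hwj with h | h
    · exact hwA h
    · have hlt : k - 2 + 1 < k := by omega
      have hfe : (⟨k - 2 + 1, hlt⟩ : Fin k) = ⟨k - 1, hk1⟩ := Fin.mk_eq_mk.mpr (by omega)
      have hw' : w ∈ S ⟨k - 2 + 1, hlt⟩ \ S ⟨k - 2, hk2⟩ := by
        rw [hfe]; exact ⟨hwB, hwA⟩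
      have hRu : ReachOutside G (S ⟨k - 2, hk2⟩) w u := hchain (k - 2) hlt w hw'
      exact (hsep ⟨k - 2, hk2⟩).2.2.2 (RO_trans (RO_symm hRu) h)
  refine ⟨w, hwB, ?_⟩
  simp only [Set.mem_iUnion, not_exists]
  intro i hi
  exact hnotin i.val hi
end

section
/- Let G be a d-connected graph, let u, v, x be vertices, and let X and X′ be noncrossing d-fragments of G with x ∈ N_G(X). If X is (u,v)-separating and X′ is (u,x)-separating, then X′ is also (u,v)-separating. -/
variable {V : Type*}

/-!
Write `N`, `N'` for the neighbourhoods of `X`, `X'`. Since `x ∈ N \ N'` and `N` does not cross `N'`,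
all of `N \ N'` lies on the side of `X'` containing `x`, so `N` misses the side `P` of `X'`
containing `u`. As `|N| = |N'|`, also `N' \ N` is nonempty; it lies on one side of `X`, so `N'`
misses the other side `Q` of `X`. Now `Q ∩ P = ∅`, for otherwise `N ∩ N'`, of size `< d`, would
cut it off from `x`. Hence `u ∉ Q`, so `v ∈ Q`, and `v` lies neither in `P` nor in `N'`.
-/

theorem Set.sdiff_nonempty_of_ncard_le {α : Type*} [Finite α] {s t : Set α}
    (h : s.ncard ≤ t.ncard) (hst : (s \ t).Nonempty) : (t \ s).Nonempty := by
  have hle := (Set.ncard_le_ncard_iff_ncard_sdiff_le_ncard_sdiff (s := s) (t := t)).1 h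
  have hpos := (Set.ncard_pos (s := s \ t)).2 hst
  exact Set.nonempty_of_ncard_ne_zero (by omega)

section

variable {G : SimpleGraph V}

theorem ReachOutside.mem_of_nbhd_subset {S A : Set V} (hA : nbhd G A ⊆ S) {a b : V}
    (h : ReachOutside G S a b) (ha : a ∈ A) : b ∈ A := by
  obtain ⟨_, _, ⟨p⟩⟩ := h
  suffices ∀ (s t : ↥Sᶜ) (q : (G.induce Sᶜ).Walk s t), s.1 ∈ A → t.1 ∈ A from this _ _ p ha
  intro s t q
  induction q with
  | nil => exact id
  | @cons s c t hadj _ ih =>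
    intro hs
    by_contra hc
    exact c.2 (hA ⟨fun h => hc (ih h), s, hs, hadj⟩)

theorem isSeparator_of_nbhd_subset {S A : Set V} (hA : nbhd G A ⊆ S) {w x : V}
    (hwA : w ∈ A) (hwS : w ∉ S) (hxA : x ∉ A) (hxS : x ∉ S) : IsSeparator G S :=
  ⟨w, x, hwS, hxS, fun h => hxA (h.mem_of_nbhd_subset hA hwA)⟩

theorem nbhd_inter_subset_inter {A B S T : Set V} (hA : nbhd G A ⊆ S) (hB : nbhd G B ⊆ T)
    (hSB : Disjoint S B) (hTA : Disjoint T A) : nbhd G (A ∩ B) ⊆ S ∩ T := by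
  rintro y ⟨hyAB, z, ⟨hzA, hzB⟩, hzy⟩
  have hyA : y ∉ A := fun hyA =>
    Set.disjoint_left.1 hTA (hB ⟨fun hyB => hyAB ⟨hyA, hyB⟩, z, hzB, hzy⟩) hyA
  have hyS : y ∈ S := hA ⟨hyA, z, hzA, hzy⟩
  exact ⟨hyS, hB ⟨Set.disjoint_left.1 hSB hyS, z, hzB, hzy⟩⟩

/-- If `A ∩ B` were nonempty, `S ∩ T`, which misses `x ∈ S`, would be a separator of size `< d`
cutting it off from `x`. -/
theorem dConnected.disjoint_of_nbhd_subset [Fintype V] {d : ℕ} (hG : dConnected G d)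
    {A B S T : Set V} {x : V} (hA : nbhd G A ⊆ S) (hB : nbhd G B ⊆ T)
    (hSB : Disjoint S B) (hTA : Disjoint T A) (hxS : x ∈ S) (hxT : x ∉ T) (hxA : x ∉ A)
    (hS : S.ncard ≤ d) : Disjoint A B := by
  refine Set.disjoint_left.2 fun w hwA hwB => hG.2 (S ∩ T) ?_ ?_
  · have hST : S ∩ T ⊂ S := Set.ssubset_iff_exists.2 ⟨Set.inter_subset_left, x, hxS, (hxT ·.2)⟩
    exact (Set.ncard_lt_ncard hST).trans_le hS
  · exact isSeparator_of_nbhd_subset (nbhd_inter_subset_inter hA hB hSB hTA) ⟨hwA, hwB⟩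
      (fun h => Set.disjoint_left.1 hSB h.1 hwB) (hxA ·.1) (hxT ·.2)

theorem diff_subset_of_not_crosses {S T A : Set V} (h : ¬ Crosses G S T) (hA : nbhd G A ⊆ T)
    {s : V} (hs : s ∈ S \ T) (hsA : s ∈ A) : S \ T ⊆ A := by
  intro t ht
  by_contra hreach
  exact h ⟨s, t, hs.1, ht.1, hs.2, ht.2, fun hst => hreach (hst.mem_of_nbhd_subset hA hsA)⟩

def fragSide (G : SimpleGraph V) (X : Set V) : Bool → Set V
  | true => X
  | false => fragCompl G X

variable {X : Set V}

theorem nbhd_fragSide_subset (b : Bool) : nbhd G (fragSide G X b) ⊆ nbhd G X := by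
  cases b
  · rintro y ⟨hy, z, hz, hzy⟩
    by_contra hyN
    have hyX : y ∈ X := by_contra fun hyX => hy (by rintro (h | h) <;> contradiction)
    exact hz (Or.inr ⟨fun hzX => hz (Or.inl hzX), y, hyX, hzy.symm⟩)
  · exact subset_rfl

theorem disjoint_nbhd_fragSide (b : Bool) : Disjoint (nbhd G X) (fragSide G X b) := by
  cases b
  · exact Set.disjoint_left.2 fun _ hy hyC => hyC (Or.inr hy)
  · exact Set.disjoint_left.2 fun _ hy => hy.1

theorem disjoint_fragSide_not (b : Bool) : Disjoint (fragSide G X b) (fragSide G X !b) := by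
  cases b
  · exact Set.disjoint_left.2 fun _ hyC hyX => hyC (Or.inl hyX)
  · exact Set.disjoint_left.2 fun _ hyX hyC => hyC (Or.inl hyX)

theorem mem_fragSide_not {v : V} {b : Bool} (hvN : v ∉ nbhd G X) (hv : v ∉ fragSide G X b) :
    v ∈ fragSide G X !b := by
  cases b
  · exact by_contra fun hvX => hv (by rintro (h | h) <;> contradiction)
  · exact fun h => h.elim hv hvN

theorem fragSeparates_iff {u v : V} :
    FragSeparates G X u v ↔ ∃ b, u ∈ fragSide G X b ∧ v ∈ fragSide G X !b := by
  constructor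
  · rintro (h | h)
    exacts [⟨true, h⟩, ⟨false, h.symm⟩]
  · rintro ⟨_ | _, h⟩
    exacts [Or.inr h.symm, Or.inl h]

variable {X' : Set V}

theorem disjoint_nbhd_fragSide_of_not_crosses (h : ¬ Crosses G (nbhd G X) (nbhd G X'))
    {x : V} {b : Bool} (hxN : x ∈ nbhd G X) (hx : x ∈ fragSide G X' !b) :
    Disjoint (nbhd G X) (fragSide G X' b) := by
  have hxN' : x ∉ nbhd G X' := (Set.disjoint_left.1 (disjoint_nbhd_fragSide _) · hx)
  refine Set.disjoint_left.2 fun s hsN hs => ?_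
  have hsN' : s ∉ nbhd G X' := (Set.disjoint_left.1 (disjoint_nbhd_fragSide _) · hs)
  have := diff_subset_of_not_crosses h (nbhd_fragSide_subset _) ⟨hxN, hxN'⟩ hx ⟨hsN, hsN'⟩
  exact Set.disjoint_left.1 (disjoint_fragSide_not b) hs this

end

theorem stmt3 [Fintype V] (G : SimpleGraph V) (d : ℕ) (hG : dConnected G d) (u v x : V)
    (X X' : Set V) (hX : IsFragment G d X) (hX' : IsFragment G d X')
    (hnc : Noncrossing G (nbhd G X) (nbhd G X'))
    (hx : x ∈ nbhd G X)
    (huv : FragSeparates G X u v) (hux : FragSeparates G X' u x) :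
    FragSeparates G X' u v := by
  obtain ⟨b', hu', hx'⟩ := fragSeparates_iff.1 hux
  have hxN' : x ∉ nbhd G X' := (Set.disjoint_left.1 (disjoint_nbhd_fragSide _) · hx')
  have hN : Disjoint (nbhd G X) (fragSide G X' b') :=
    disjoint_nbhd_fragSide_of_not_crosses hnc.1 hx hx'
  obtain ⟨s, hsN', hsN⟩ : (nbhd G X' \ nbhd G X).Nonempty :=
    Set.sdiff_nonempty_of_ncard_le (by rw [hX.2.1, hX'.2.1]) ⟨x, hx, hxN'⟩
  obtain ⟨c, hs⟩ : ∃ c, s ∈ fragSide G X !c := by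
    by_cases hsX : s ∈ fragSide G X true
    exacts [⟨false, hsX⟩, ⟨true, mem_fragSide_not hsN hsX⟩]
  have hN' : Disjoint (nbhd G X') (fragSide G X c) :=
    disjoint_nbhd_fragSide_of_not_crosses hnc.2 hsN' hs
  have hcorner : Disjoint (fragSide G X c) (fragSide G X' b') :=
    hG.disjoint_of_nbhd_subset (nbhd_fragSide_subset c) (nbhd_fragSide_subset b') hN hN' hx hxN'
      (Set.disjoint_left.1 (disjoint_nbhd_fragSide c) hx) hX.2.1.le
  obtain ⟨a, hu, hv⟩ := fragSeparates_iff.1 huv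
  obtain rfl | rfl := Bool.eq_or_eq_not a c
  · exact (Set.disjoint_left.1 hcorner hu hu').elim
  rw [Bool.not_not] at hv
  have hvN' : v ∉ nbhd G X' := (Set.disjoint_left.1 hN' · hv)
  exact fragSeparates_iff.2 ⟨b', hu', mem_fragSide_not hvN' (Set.disjoint_left.1 hcorner hv)⟩
end

section
/- Let G be a d-connected graph and let X be a d-fragment of G such that N_G(X) is a clique in G. Let G′ be the subgraph of G induced by X ∪ N_G(X). Then for all u ∈ X and v ∈ X ∪ N_G(X), the maximum number of internally vertex-disjoint u–v paths in G′ equals that in G. -/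
variable {V : Type*}

/-!
Every edge leaving `X ∪ N(X)` starts in the clique `N(X)`, so whenever a `u`–`v` path leaves
`X ∪ N(X)` it does so from a vertex of `N(X)` and comes back through another one; replacing each
such excursion by the clique edge between these two vertices yields a walk in the induced subgraph
on a subset of the original vertices. This keeps internally disjoint paths internally disjoint.
Since `u ∈ X`, the first edge of the path stays inside, which keeps distinct paths distinct: two
paths can only collapse to the same one if both are the single edge `uv`.
-/

open SimpleGraph

lemma SimpleGraph.Path.eq_of_snd_eq_end {G : SimpleGraph V} {u v : V} (huv : u ≠ v)
    {p q : G.Path u v} (hp : p.1.snd = v) (hq : q.1.snd = v) : p = q := by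
  have hedge : ∀ r : G.Path u v, r.1.snd = v → s(u, v) ∈ r.1.edges := fun r hr => by
    simpa [hr] using r.1.mk_start_snd_mem_edges (Walk.not_nil_of_ne huv)
  exact Subtype.ext ((p.2.eq_adj_toWalk_of_mem_edges (hedge p hp)).trans
    (q.2.eq_adj_toWalk_of_mem_edges (hedge q hq)).symm)

lemma HasIntDisjPaths.map {W : Type*} {G : SimpleGraph V} {G' : SimpleGraph W} (φ : G ↪g G')
    {u v : V} {k : ℕ} (h : HasIntDisjPaths G u v k) : HasIntDisjPaths G' (φ u) (φ v) k := by
  obtain ⟨f, finj, fdisj⟩ := h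
  refine ⟨fun i => (f i).mapEmbedding φ,
    fun i j hij => finj (Path.mapEmbedding_injective _ _ _ hij), fun i j hij x hxi hxj => ?_⟩
  rw [Path.mapEmbedding_coe, Walk.support_map, List.mem_map] at hxi hxj
  obtain ⟨y, hy, rfl⟩ := hxi
  obtain ⟨z, hz, hzy⟩ := hxj
  obtain rfl : z = y := φ.injective hzy
  rcases fdisj i j hij z hy hz with rfl | rfl <;> simp

section Shortcut

variable {G : SimpleGraph V} {S K : Set V}

lemma exists_induce_walk_support_subset (hbdry : ∀ a b, G.Adj a b → a ∈ S → b ∉ S → a ∈ K)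
    (hK : ∀ a ∈ K, ∀ b ∈ K, a ≠ b → G.Adj a b) {w v : V} (p : G.Walk w v) (hv : v ∈ S)
    {c : V} (hc : c ∈ S) (hcw : w = c ∨ w ∉ S ∧ c ∈ K) :
    ∃ q : (G.induce S).Walk ⟨c, hc⟩ ⟨v, hv⟩, ∀ x ∈ q.support, ↑x = c ∨ ↑x ∈ p.support := by
  -- `c` is where the shortcut currently stands: either at `w`, or, during an excursion
  -- outside `S`, at the vertex of `K` where the excursion began.
  induction p generalizing c with
  | nil =>
    rcases hcw with rfl | ⟨hw, -⟩
    · exact ⟨.nil, by simp⟩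
    · exact absurd hv hw
  | @cons w x v h p ih =>
    by_cases hx : x ∈ S
    · have hstep : c = x ∨ (G.induce S).Adj ⟨c, hc⟩ ⟨x, hx⟩ := by
        rcases hcw with rfl | ⟨hw, hcK⟩
        · exact .inr h
        · exact (eq_or_ne c x).imp id (hK c hcK x (hbdry x w h.symm hx hw))
      obtain ⟨q, hq⟩ := ih hv hx (.inl rfl)
      rcases hstep with rfl | hadj
      · exact ⟨q, fun y hy => by rcases hq y hy with h' | h' <;> simp [h']⟩
      · refine ⟨.cons hadj q, fun y hy => ?_⟩
        rcases List.mem_cons.mp (Walk.support_cons hadj q ▸ hy) with rfl | hy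
        · exact .inl rfl
        · rcases hq y hy with h' | h' <;> simp [h']
    · have hcK : c ∈ K := by
        rcases hcw with rfl | ⟨-, hcK⟩
        · exact hbdry w x h hc hx
        · exact hcK
      obtain ⟨q, hq⟩ := ih hv hc (.inr ⟨hx, hcK⟩)
      exact ⟨q, fun y hy => by rcases hq y hy with h' | h' <;> simp [h']⟩

lemma exists_induce_path_snd_eq (hbdry : ∀ a b, G.Adj a b → a ∈ S → b ∉ S → a ∈ K)
    (hK : ∀ a ∈ K, ∀ b ∈ K, a ≠ b → G.Adj a b) {u v : V} (p : G.Path u v) (hu : u ∈ S)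
    (huK : u ∉ K) (hv : v ∈ S) :
    ∃ q : (G.induce S).Path ⟨u, hu⟩ ⟨v, hv⟩,
      (∀ x ∈ q.1.support, ↑x ∈ p.1.support) ∧ ↑q.1.snd = p.1.snd := by
  classical
  obtain ⟨p, hp⟩ := p
  cases p with
  | nil => exact ⟨.nil, by simp, rfl⟩
  | @cons _ w _ h p =>
    have hw : w ∈ S := by_contra fun hw => huK (hbdry u w h hu hw)
    obtain ⟨q, hq⟩ := exists_induce_walk_support_subset hbdry hK p hv hw (.inl rfl)
    have hq' : ∀ x ∈ q.bypass.support, ↑x ∈ p.support := fun x hx =>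
      (hq x (q.support_bypass_subset_support hx)).elim (· ▸ p.start_mem_support) id
    have hadj : (G.induce S).Adj ⟨u, hu⟩ ⟨w, hw⟩ := h
    have hpath : (Walk.cons hadj q.bypass).IsPath :=
      (Walk.cons_isPath_iff _ _).2
        ⟨q.bypass_isPath, fun hmem => ((Walk.cons_isPath_iff _ _).1 hp).2 (hq' _ hmem)⟩
    refine ⟨⟨_, hpath⟩, fun x hx => ?_, by simp⟩
    rcases List.mem_cons.mp (Walk.support_cons hadj _ ▸ hx) with rfl | hx
    · simp
    · simp [hq' x hx]

lemma HasIntDisjPaths.induce (hbdry : ∀ a b, G.Adj a b → a ∈ S → b ∉ S → a ∈ K)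
    (hK : ∀ a ∈ K, ∀ b ∈ K, a ≠ b → G.Adj a b) {u v : V} (hu : u ∈ S) (huK : u ∉ K)
    (hv : v ∈ S) {k : ℕ} (h : HasIntDisjPaths G u v k) :
    HasIntDisjPaths (G.induce S) ⟨u, hu⟩ ⟨v, hv⟩ k := by
  obtain ⟨f, finj, fdisj⟩ := h
  choose g hsupp hsnd using fun i => exists_induce_path_snd_eq hbdry hK (f i) hu huK hv
  refine ⟨g, fun i j hij => ?_, fun i j hij x hxi hxj => ?_⟩
  · by_contra hne
    obtain rfl | huv := eq_or_ne u v
    · exact hne (finj ((f i).loop_eq.trans (f j).loop_eq.symm))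
    have hsnd_eq : (f i).1.snd = (f j).1.snd := by rw [← hsnd i, ← hsnd j, hij]
    rcases fdisj i j hne (f i).1.snd ((f i).1.getVert_mem_support 1)
      (hsnd_eq ▸ (f j).1.getVert_mem_support 1) with h | h
    · exact (Walk.adj_snd (Walk.not_nil_of_ne huv)).ne h.symm
    · exact hne (finj (Path.eq_of_snd_eq_end huv h (hsnd_eq ▸ h)))
  · exact (fdisj i j hij x (hsupp i x hxi) (hsupp j x hxj)).imp Subtype.ext Subtype.ext

end Shortcut

lemma mem_nbhd_of_adj_of_notMem {G : SimpleGraph V} {X : Set V} {a b : V} (h : G.Adj a b)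
    (ha : a ∈ X ∪ nbhd G X) (hb : b ∉ X ∪ nbhd G X) : a ∈ nbhd G X :=
  ha.resolve_left fun haX => hb <| (em (b ∈ X)).elim .inl fun hbX => .inr ⟨hbX, a, haX, h⟩

theorem stmt4_general (G : SimpleGraph V) (X : Set V)
    (hclique : ∀ a ∈ nbhd G X, ∀ b ∈ nbhd G X, a ≠ b → G.Adj a b)
    (u v : V) (hu : u ∈ X) (hv : v ∈ X ∪ nbhd G X) :
    localConn (G.induce (X ∪ nbhd G X)) ⟨u, Set.mem_union_left _ hu⟩ ⟨v, hv⟩ =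
      localConn G u v := by
  unfold localConn
  congr 1
  ext k
  exact ⟨HasIntDisjPaths.map (Embedding.induce _), HasIntDisjPaths.induce
    (fun _ _ => mem_nbhd_of_adj_of_notMem) hclique _ (fun h => h.1 hu) hv⟩

theorem stmt4 [Fintype V] (G : SimpleGraph V) (d : ℕ) (hG : dConnected G d)
    (X : Set V) (hX : IsFragment G d X)
    (hclique : ∀ a ∈ nbhd G X, ∀ b ∈ nbhd G X, a ≠ b → G.Adj a b)
    (u v : V) (hu : u ∈ X) (hv : v ∈ X ∪ nbhd G X) :
    localConn (G.induce (X ∪ nbhd G X)) ⟨u, Set.mem_union_left _ hu⟩ ⟨v, hv⟩ =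
      localConn G u v :=
  stmt4_general G X hclique u v hu hv
end

section
/- Let X be a d-fragment of a graph G with S = N_G(X), and let (G,p) be a d-dimensional framework such that p(S) is affinely independent. Define q by q(v) = p(v) for v ∈ X ∪ S and q(v) = the reflection of p(v) in the affine hyperplane spanned by p(S) for v in the complement X̄. Then (G,q) is equivalent to (G,p), i.e., ‖q(a) − q(b)‖ = ‖p(a) − p(b)‖ for every edge ab of G. -/
variable {V : Type*}

variable {V : Type*}

/-- a `d`-dimensional framework `(G,p)` is generic if the coordinates of the points are
algebraically independent over `ℚ`. -/
def Genericp (d : ℕ) (p : V → EuclideanSpace ℝ (Fin d)) : Prop :=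
  AlgebraicIndependent ℚ (fun vi : V × Fin d => p vi.1 vi.2)

/-- `(G,p)` and `(G,q)` are equivalent: corresponding edges have equal lengths. -/
def FEquiv (G : SimpleGraph V) (d : ℕ) (p q : V → EuclideanSpace ℝ (Fin d)) : Prop :=
  ∀ a b, G.Adj a b → dist (p a) (p b) = dist (q a) (q b)

/-- `(G,p)` and `(G,q)` are congruent. -/
def FCong {d : ℕ} (p q : V → EuclideanSpace ℝ (Fin d)) : Prop :=
  ∀ a b, dist (p a) (p b) = dist (q a) (q b)

/-- orthogonal reflection in the affine span of `s` (the identity for `s = ∅`). -/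
noncomputable def reflSpan {d : ℕ} (s : Set (EuclideanSpace ℝ (Fin d))) :
    EuclideanSpace ℝ (Fin d) → EuclideanSpace ℝ (Fin d) :=
  haveI := Classical.propDecidable s.Nonempty
  if h : s.Nonempty then
    haveI : Nonempty s := h.to_subtype
    fun x => EuclideanGeometry.reflection (affineSpan ℝ s) x
  else id

/-- `(G,p)` is rigid. -/
def RigidFw (G : SimpleGraph V) (d : ℕ) (p : V → EuclideanSpace ℝ (Fin d)) : Prop :=
  ∃ ε > (0 : ℝ), ∀ q, FEquiv G d p q → (∀ w, dist (p w) (q w) < ε) → FCong p q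

/-- `G` is rigid in `ℝ^d`. -/
def RigidGraph (G : SimpleGraph V) (d : ℕ) : Prop :=
  ∀ p, Genericp d p → RigidFw G d p

/-- `G` is globally rigid in `ℝ^d`. -/
def GloballyRigidGraph (G : SimpleGraph V) (d : ℕ) : Prop :=
  ∀ p, Genericp d p → ∀ q, FEquiv G d p q → FCong p q

/-- `{u,v}` is globally linked in `G` in `ℝ^d`. -/
def GloballyLinked (G : SimpleGraph V) (d : ℕ) (u v : V) : Prop :=
  ∀ p q, Genericp d p → FEquiv G d p q → dist (p u) (p v) = dist (q u) (q v)

/-- the partial reflection corresponding to the fragment `X`: points of the complement of `X`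
are reflected in the affine hyperplane spanned by the image of `N_G(X)`. -/
noncomputable def partialRefl (G : SimpleGraph V) (X : Set V) (d : ℕ)
    (p : V → EuclideanSpace ℝ (Fin d)) : V → EuclideanSpace ℝ (Fin d) :=
  fun w => haveI := Classical.propDecidable (w ∈ X ∪ nbhd G X)
    if w ∈ X ∪ nbhd G X then p w else reflSpan (p '' nbhd G X) (p w)

/-!
Reflection in the affine span of `p(N_G(X))` is an isometry fixing `p(N_G(X))`, so the partial
reflection agrees with `p` on `X ∪ N_G(X)` and with the reflected framework on `V − X`. Every edge
has both ends in one of these two sets, since no edge joins `X` to `V − X − N_G(X)`.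
-/

theorem isometry_reflSpan {d : ℕ} (s : Set (EuclideanSpace ℝ (Fin d))) :
    Isometry (reflSpan s) := by
  unfold reflSpan
  split_ifs with h
  · have : Nonempty s := h.to_subtype
    exact (EuclideanGeometry.reflection (affineSpan ℝ s)).isometry
  · exact isometry_id

theorem reflSpan_eq_self_of_mem {d : ℕ} {s : Set (EuclideanSpace ℝ (Fin d))}
    {x : EuclideanSpace ℝ (Fin d)} (hx : x ∈ s) : reflSpan s x = x := by
  unfold reflSpan
  rw [dif_pos ⟨x, hx⟩]
  have : Nonempty s := ⟨⟨x, hx⟩⟩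
  exact (EuclideanGeometry.reflection_eq_self_iff _).2 (mem_affineSpan ℝ hx)

theorem mem_nbhd_of_adj {G : SimpleGraph V} {X : Set V} {a b : V} (hab : G.Adj a b)
    (ha : a ∈ X) (hb : b ∉ X) : b ∈ nbhd G X :=
  ⟨hb, a, ha, hab⟩

theorem adj_mem_union_nbhd_or_notMem {G : SimpleGraph V} {X : Set V} {a b : V}
    (hab : G.Adj a b) : (a ∈ X ∪ nbhd G X ∧ b ∈ X ∪ nbhd G X) ∨ (a ∉ X ∧ b ∉ X) := by
  by_cases ha : a ∈ X <;> by_cases hb : b ∈ X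
  · exact .inl ⟨.inl ha, .inl hb⟩
  · exact .inl ⟨.inl ha, .inr (mem_nbhd_of_adj hab ha hb)⟩
  · exact .inl ⟨.inr (mem_nbhd_of_adj hab.symm hb ha), .inl hb⟩
  · exact .inr ⟨ha, hb⟩

section partialRefl

variable {G : SimpleGraph V} {X : Set V} {d : ℕ} {p : V → EuclideanSpace ℝ (Fin d)} {w : V}

theorem partialRefl_of_mem (hw : w ∈ X ∪ nbhd G X) : partialRefl G X d p w = p w :=
  if_pos hw

theorem partialRefl_of_notMem (hw : w ∉ X) :
    partialRefl G X d p w = reflSpan (p '' nbhd G X) (p w) := by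
  by_cases hS : w ∈ nbhd G X
  · rw [partialRefl_of_mem (.inr hS), reflSpan_eq_self_of_mem (Set.mem_image_of_mem p hS)]
  · exact if_neg (by simp [hw, hS])

end partialRefl

theorem stmt10_general (G : SimpleGraph V) (d : ℕ) (X : Set V)
    (p : V → EuclideanSpace ℝ (Fin d)) :
    FEquiv G d p (partialRefl G X d p) := by
  intro a b hab
  rcases adj_mem_union_nbhd_or_notMem hab with ⟨ha, hb⟩ | ⟨ha, hb⟩
  · rw [partialRefl_of_mem ha, partialRefl_of_mem hb]
  · rw [partialRefl_of_notMem ha, partialRefl_of_notMem hb, (isometry_reflSpan _).dist_eq]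

theorem stmt10 (G : SimpleGraph V) (d : ℕ) (X : Set V) (hX : IsFragment G d X)
    (p : V → EuclideanSpace ℝ (Fin d))
    (hadm : AffineIndependent ℝ (fun s : ↥(nbhd G X) => p ↑s)) :
    FEquiv G d p (partialRefl G X d p) :=
  stmt10_general G d X p
end

section
/- Every d-connected chordal graph on at least d+1 vertices has a globally rigid gluing construction in ℝ^d: it can be built by a sequence of graphs each of which is either globally rigid in ℝ^d on at least d+1 vertices, or the union of two earlier graphs in the sequence, each with strictly smaller vertex set, intersecting in at least d vertices. -/
variable {V : Type*}

variable {V : Type*}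

/-- `G` is chordal: it has no induced cycle of length at least four. -/
def IsChordal (G : SimpleGraph V) : Prop :=
  ∀ n : ℕ, 4 ≤ n → IsEmpty (SimpleGraph.cycleGraph n ↪g G)

/-- a globally rigid gluing construction in `ℝ^d` of a subgraph of `G`: the subgraph is either
globally rigid in `ℝ^d` on at least `d+1` vertices, or the union of two previously constructed
subgraphs, each with strictly smaller vertex set, intersecting in at least `d` vertices. -/
inductive GluingConstr (G : SimpleGraph V) (d : ℕ) : G.Subgraph → Prop
  | base (H : G.Subgraph) (h1 : d + 1 ≤ H.verts.ncard)
      (h2 : GloballyRigidGraph H.coe d) : GluingConstr G d H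
  | glue (H₁ H₂ : G.Subgraph) (hc₁ : GluingConstr G d H₁) (hc₂ : GluingConstr G d H₂)
      (h3 : H₁.verts ≠ H₁.verts ∪ H₂.verts) (h4 : H₂.verts ≠ H₁.verts ∪ H₂.verts)
      (h5 : d ≤ (H₁.verts ∩ H₂.verts).ncard) : GluingConstr G d (H₁ ⊔ H₂)

/-!
Induct on vertex sets `W` such that `G[W]` is `d`-connected. If `G[W]` is complete, it is
globally rigid. Otherwise pick non-adjacent `x, y ∈ W` and a minimum `x`–`y` separator `T` of
`G[W]`; it has at least `d` vertices, and since `G` is chordal it is a clique: two non-adjacent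
vertices of `T` would be joined by chordless paths through the component `A` of `x` and through
the component of `y`, which together form a chordless cycle of length at least four. The pieces
`A ∪ T` and `W \ A` are again `d`-connected, since a walk can leave either piece only through the
clique `T`, and they meet in `T`, so `G[W]` is glued from the constructions of the two pieces.
-/

namespace SimpleGraph

variable {G : SimpleGraph V}

namespace Walk

variable {u v : V}

theorem IsChordless.map {W : Type*} {G' : SimpleGraph W} (f : G ↪g G') {p : G.Walk u v}
    (hp : p.IsChordless) : (p.map f.toHom).IsChordless := by
  rw [isChordless_iff_forall_mem_edges]
  intro x y hx hy hxy
  simp only [support_map, List.mem_map] at hx hy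
  obtain ⟨x, hx, rfl⟩ := hx
  obtain ⟨y, hy, rfl⟩ := hy
  rw [edges_map]
  exact List.mem_map_of_mem (hp.mem_edges hx hy (f.map_adj_iff.1 hxy))

theorem dist_getVert_of_length_eq_dist {p : G.Walk u v} (hp : p.length = G.dist u v) {i : ℕ}
    (hi : i ≤ p.length) : G.dist u (p.getVert i) = i := by
  have hle : G.dist u (p.getVert i) ≤ i := by
    simpa [take_length, hi] using dist_le (p.take i)
  have hdrop : G.dist (p.getVert i) v ≤ p.length - i := by
    simpa [drop_length] using dist_le (p.drop i)
  have := (p.drop i).reachable.dist_triangle_right u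
  omega

theorem isChordless_of_length_eq_dist {p : G.Walk u v} (hp : p.length = G.dist u v) :
    p.IsChordless := by
  rw [isChordless_iff_forall_mem_edges]
  intro x y hx hy hxy
  obtain ⟨i, rfl, hi⟩ := mem_support_iff_exists_getVert.1 hx
  obtain ⟨j, rfl, hj⟩ := mem_support_iff_exists_getVert.1 hy
  have hij : i ≠ j := by rintro rfl; exact hxy.ne rfl
  have hdist := hxy.diff_dist_adj (u := u)
  rw [dist_getVert_of_length_eq_dist hp hi, dist_getVert_of_length_eq_dist hp hj] at hdist
  rw [← adj_toSubgraph_iff_mem_edges]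
  rcases (by omega : j = i + 1 ∨ i = j + 1) with rfl | rfl
  · exact p.toSubgraph_adj_getVert (by omega)
  · exact (p.toSubgraph_adj_getVert (by omega)).symm

theorem IsChordless.append {w : V} {p : G.Walk u v} {q : G.Walk v w} (hp : p.IsChordless)
    (hq : q.IsChordless)
    (hpq : ∀ x ∈ p.support, ∀ y ∈ q.support, G.Adj x y → x ∈ q.support ∨ y ∈ p.support) :
    (p.append q).IsChordless := by
  have hcross : ∀ x ∈ p.support, ∀ y ∈ q.support, G.Adj x y → s(x, y) ∈ (p.append q).edges := by
    intro x hx y hy hxy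
    rw [edges_append, List.mem_append]
    rcases hpq x hx y hy hxy with hxq | hyp
    exacts [.inr (hq.mem_edges hxq hy hxy), .inl (hp.mem_edges hx hyp hxy)]
  rw [isChordless_iff_forall_mem_edges]
  intro x y hx hy hxy
  rcases (mem_support_append_iff _ _).1 hx with hx | hx <;>
    rcases (mem_support_append_iff _ _).1 hy with hy | hy
  · exact edges_append p q ▸ List.mem_append_left _ (hp.mem_edges hx hy hxy)
  · exact hcross x hx y hy hxy
  · exact Sym2.eq_swap ▸ hcross y hy x hx hxy.symm
  · exact edges_append p q ▸ List.mem_append_right _ (hq.mem_edges hx hy hxy)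

end Walk

theorem Reachable.exists_isPath_isChordless {u v : V} (h : G.Reachable u v) :
    ∃ p : G.Walk u v, p.IsPath ∧ p.IsChordless := by
  obtain ⟨p, hp⟩ := h.exists_walk_length_eq_dist
  exact ⟨p, p.isPath_of_length_eq_dist hp, Walk.isChordless_of_length_eq_dist hp⟩

/-- Reachability in `G.induce S` (see `ReachableIn.iff_reachable_induce`), without subtypes. -/
def ReachableIn (G : SimpleGraph V) (S : Set V) (u v : V) : Prop :=
  ∃ p : G.Walk u v, ∀ z ∈ p.support, z ∈ S

namespace ReachableIn

variable {S : Set V} {t u v w : V}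

theorem mem_left (h : G.ReachableIn S u v) : u ∈ S :=
  h.elim fun p hp => hp u p.start_mem_support

theorem mem_right (h : G.ReachableIn S u v) : v ∈ S :=
  h.elim fun p hp => hp v p.end_mem_support

theorem refl (hu : u ∈ S) : G.ReachableIn S u u :=
  ⟨.nil, by simpa using hu⟩

theorem symm (h : G.ReachableIn S u v) : G.ReachableIn S v u := by
  obtain ⟨p, hp⟩ := h
  exact ⟨p.reverse, by simpa using hp⟩

theorem trans (h₁ : G.ReachableIn S u v) (h₂ : G.ReachableIn S v w) : G.ReachableIn S u w := by
  obtain ⟨p, hp⟩ := h₁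
  obtain ⟨q, hq⟩ := h₂
  refine ⟨p.append q, fun z hz => ?_⟩
  rcases (Walk.mem_support_append_iff _ _).1 hz with hz | hz
  exacts [hp z hz, hq z hz]

theorem mono {S' : Set V} (hS : S ⊆ S') (h : G.ReachableIn S u v) : G.ReachableIn S' u v :=
  h.elim fun p hp => ⟨p, fun z hz => hS (hp z hz)⟩

theorem of_adj (hu : u ∈ S) (hv : v ∈ S) (huv : G.Adj u v) : G.ReachableIn S u v :=
  ⟨huv.toWalk, by simp [hu, hv]⟩

theorem adj_right (h : G.ReachableIn S u v) (hvw : G.Adj v w) (hw : w ∈ S) :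
    G.ReachableIn S u w :=
  h.trans (of_adj h.mem_right hw hvw)

theorem within_component (h : G.ReachableIn S u v) :
    G.ReachableIn {w | G.ReachableIn S u w} u v := by
  classical
  obtain ⟨p, hp⟩ := h
  exact ⟨p, fun w hw =>
    ⟨p.takeUntil w hw, fun z hz => hp z (p.support_takeUntil_subset_support hw hz)⟩⟩

theorem iff_reachable_induce (hu : u ∈ S) (hv : v ∈ S) :
    G.ReachableIn S u v ↔ (G.induce S).Reachable ⟨u, hu⟩ ⟨v, hv⟩ := by
  constructor
  · rintro ⟨p, hp⟩
    exact ⟨p.induce S hp⟩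
  · rintro ⟨p⟩
    refine ⟨p.map (Embedding.induce S).toHom, fun z hz => ?_⟩
    obtain ⟨z, -, rfl⟩ := List.mem_map.1 (Walk.support_map _ _ ▸ hz)
    exact z.2

theorem exists_isPath_isChordless (h : G.ReachableIn S u v) :
    ∃ p : G.Walk u v, p.IsPath ∧ p.IsChordless ∧ ∀ z ∈ p.support, z ∈ S := by
  obtain ⟨p, hp, hpc⟩ :=
    Reachable.exists_isPath_isChordless ((iff_reachable_induce h.mem_left h.mem_right).1 h)
  refine ⟨p.map (Embedding.induce S).toHom, hp.map Subtype.val_injective, hpc.map _,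
    fun z hz => ?_⟩
  obtain ⟨z, -, rfl⟩ := List.mem_map.1 (Walk.support_map _ _ ▸ hz)
  exact z.2

theorem eq_or_adj_of_pair (h : G.ReachableIn {u, v} u v) : u = v ∨ G.Adj u v := by
  obtain ⟨p, hp⟩ := h
  cases p with
  | nil => exact .inl rfl
  | cons huw q =>
    rcases hp _ (List.mem_cons_of_mem _ q.start_mem_support) with hw | hw
    · exact absurd rfl (hw ▸ huw).ne
    · exact .inr (hw ▸ huw)

theorem exists_adj_of_insert (h : G.ReachableIn (insert t S) u v) (hu : u ∈ S)
    (huv : ¬ G.ReachableIn S u v) : ∃ z, G.ReachableIn S u z ∧ G.Adj z t := by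
  obtain ⟨p, hp⟩ := h
  obtain ⟨e, he, he₁, he₂⟩ :=
    p.exists_boundary_dart {z | G.ReachableIn S u z} (ReachableIn.refl hu) huv
  refine ⟨e.fst, he₁, ?_⟩
  rcases hp _ (p.dart_snd_mem_support_of_mem_darts he) with ht | hS
  · exact ht ▸ e.adj
  · exact absurd (he₁.adj_right e.adj hS) he₂

theorem of_isClique_boundary {W W' T : Set V} (hT : G.IsClique T)
    (hbd : ∀ a ∈ W', ∀ b ∈ W \ W', G.Adj a b → a ∈ T)
    (h : G.ReachableIn (W \ S) u v) (hu : u ∈ W') (hv : v ∈ W') :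
    G.ReachableIn (W' \ S) u v := by
  obtain ⟨p, hp⟩ := h
  -- A walk leaves `W'` only through the clique `T`, so each excursion outside `W'` can be
  -- replaced by a single edge of `T`.
  suffices ∀ {x} (p : G.Walk x v), (∀ z ∈ p.support, z ∈ W \ S) →
      (x ∈ W' → G.ReachableIn (W' \ S) x v) ∧
        (x ∉ W' → ∃ t ∈ T, G.ReachableIn (W' \ S) t v) from (this p hp).1 hu
  clear p hp hu
  intro x p
  induction p with
  | nil =>
    intro hp
    exact ⟨fun _ => refl ⟨hv, (hp _ (by simp)).2⟩, fun h => absurd hv h⟩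
  | @cons x z _ hxz q ih =>
    intro hp
    have hx : x ∈ W \ S := hp x (by simp)
    have hz : z ∈ W \ S := hp z (by simp)
    obtain ⟨ih_mem, ih_not_mem⟩ := ih hv fun w hw => hp w (List.mem_cons_of_mem _ hw)
    constructor
    · intro hxW'
      by_cases hzW' : z ∈ W'
      · exact (of_adj (S := W' \ S) ⟨hxW', hx.2⟩ ⟨hzW', hz.2⟩ hxz).trans (ih_mem hzW')
      obtain ⟨t, htT, htv⟩ := ih_not_mem hzW'
      rcases eq_or_ne x t with rfl | hxt
      · exact htv
      have hxT : x ∈ T := hbd x hxW' z ⟨hz.1, hzW'⟩ hxz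
      exact (of_adj (S := W' \ S) ⟨hxW', hx.2⟩ htv.mem_left (hT hxT htT hxt)).trans htv
    · intro hxW'
      by_cases hzW' : z ∈ W'
      · exact ⟨z, hbd z hzW' x ⟨hx.1, hxW'⟩ hxz.symm, ih_mem hzW'⟩
      · exact ih_not_mem hzW'

end ReachableIn

theorem exists_minimal_separator [Finite V] {W : Set V} {x y : V} (hxy : x ≠ y)
    (hnadj : ¬ G.Adj x y) :
    ∃ T ⊆ W \ {x, y}, ¬ G.ReachableIn (W \ T) x y ∧
      ∀ t ∈ T, G.ReachableIn (W \ (T \ {t})) x y := by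
  obtain ⟨T, ⟨hTsub, hTsep⟩, hTmin⟩ := exists_minimal_of_wellFoundedLT
    (fun T : Set V => T ⊆ W \ {x, y} ∧ ¬ G.ReachableIn (W \ T) x y)
    ⟨W \ {x, y}, subset_rfl, fun h => (h.mono (by simp)).eq_or_adj_of_pair.elim hxy hnadj⟩
  refine ⟨T, hTsub, hTsep, fun t ht => ?_⟩
  by_contra hsep
  exact (hTmin ⟨Set.sdiff_subset.trans hTsub, hsep⟩ Set.sdiff_subset ht).2 (Set.mem_singleton t)

theorem Adj.mem_union_or_mem_sdiff {W T A : Set V}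
    (hA : ∀ a ∈ A, ∀ b ∈ W \ T, G.Adj a b → b ∈ A) {u v : V} (huv : G.Adj u v) (hu : u ∈ W)
    (hv : v ∈ W) : (u ∈ A ∪ T ∧ v ∈ A ∪ T) ∨ (u ∈ W \ A ∧ v ∈ W \ A) := by
  by_cases huA : u ∈ A
  · refine .inl ⟨.inl huA, ?_⟩
    by_cases hvT : v ∈ T
    exacts [.inr hvT, .inl (hA u huA v ⟨hv, hvT⟩ huv)]
  by_cases hvA : v ∈ A
  · refine .inl ⟨.inr ?_, .inl hvA⟩
    by_contra huT
    exact huA (hA v hvA u ⟨hu, huT⟩ huv.symm)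
  exact .inr ⟨⟨hu, huA⟩, hv, hvA⟩

theorem Subgraph.induce_top_sup_induce_top {W₁ W₂ : Set V}
    (h : ∀ u ∈ W₁ ∪ W₂, ∀ v ∈ W₁ ∪ W₂, G.Adj u v → (u ∈ W₁ ∧ v ∈ W₁) ∨ (u ∈ W₂ ∧ v ∈ W₂)) :
    (⊤ : G.Subgraph).induce W₁ ⊔ (⊤ : G.Subgraph).induce W₂ =
      (⊤ : G.Subgraph).induce (W₁ ∪ W₂) := by
  ext u v
  · simp
  · simp only [Subgraph.sup_adj, Subgraph.induce_adj, Subgraph.top_adj]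
    constructor
    · rintro (⟨hu, hv, huv⟩ | ⟨hu, hv, huv⟩)
      exacts [⟨.inl hu, .inl hv, huv⟩, ⟨.inr hu, .inr hv, huv⟩]
    · rintro ⟨hu, hv, huv⟩
      rcases h u hu v hv huv with ⟨hu, hv⟩ | ⟨hu, hv⟩
      exacts [.inl ⟨hu, hv, huv⟩, .inr ⟨hu, hv, huv⟩]

end SimpleGraph

section

open SimpleGraph

variable {G : SimpleGraph V}

theorem IsChordal.lt_four_of_inducedCycle (hG : IsChordal G) {m : ℕ} (φ : Fin (m + 2) → V)
    (hφ : Function.Injective φ) (hadj : ∀ k, G.Adj (φ k) (φ (k + 1)))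
    (hchord : ∀ i j, G.Adj (φ i) (φ j) → ∃ k, s(φ i, φ j) = s(φ k, φ (k + 1))) :
    m + 2 < 4 := by
  by_contra! hm
  refine (hG (m + 2) hm).false ⟨⟨φ, hφ⟩, fun {i j} => ?_⟩
  change G.Adj (φ i) (φ j) ↔ (cycleGraph (m + 2)).Adj i j
  rw [cycleGraph_adj, sub_eq_iff_eq_add', sub_eq_iff_eq_add']
  constructor
  · intro h
    obtain ⟨k, hk⟩ := hchord i j h
    rcases Sym2.eq_iff.1 hk with ⟨hi, hj⟩ | ⟨hi, hj⟩
    · rw [hφ hi, hφ hj]; exact .inr rfl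
    · rw [hφ hi, hφ hj]; exact .inl rfl
  · rintro (rfl | rfl)
    exacts [(hadj j).symm, hadj i]

theorem IsChordal.length_lt_four (hG : IsChordal G) {u : V} {c : G.Walk u u} (hc : c.IsCycle)
    (hcc : c.IsChordless) : c.length < 4 := by
  obtain ⟨m, hm⟩ : ∃ m, c.length = m + 2 :=
    ⟨c.length - 2, by have := hc.three_le_length; omega⟩
  have hsucc : ∀ k : Fin (m + 2), c.getVert (k + 1 : Fin (m + 2)) = c.getVert (k + 1) := by
    intro k
    rw [Fin.val_add_one]
    split_ifs with hk
    · rw [hk, Fin.val_last, ← hm, c.getVert_length, c.getVert_zero]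
    · rfl
  rw [hm]
  refine hG.lt_four_of_inducedCycle (fun k => c.getVert k) ?_ ?_ ?_
  · intro i j hij
    exact Fin.ext (hc.getVert_injOn' (by simp; omega) (by simp; omega) hij)
  · intro k
    simpa [hsucc] using c.adj_getVert_succ (by omega : k.val < c.length)
  · intro i j hij
    obtain ⟨k, hk, hke⟩ := (c.mk_mem_edges_iff_exists).1
      (hcc.mem_edges (c.getVert_mem_support _) (c.getVert_mem_support _) hij)
    exact ⟨⟨k, by omega⟩, by simpa [hsucc] using hke.symm⟩

theorem IsChordal.adj_of_reachableIn (hG : IsChordal G) {A B : Set V} (hAB : Disjoint A B)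
    (hnadj : ∀ x ∈ A, ∀ y ∈ B, ¬ G.Adj x y) {a b : V} (hab : a ≠ b)
    (hA : G.ReachableIn (insert a (insert b A)) a b)
    (hB : G.ReachableIn (insert a (insert b B)) a b) : G.Adj a b := by
  by_contra hnab
  obtain ⟨p, hp, hpc, hpA⟩ := hA.exists_isPath_isChordless
  obtain ⟨q, hq, hqc, hqB⟩ := hB.symm.exists_isPath_isChordless
  have hlen : ∀ r : G.Walk a b, 2 ≤ r.length := fun r =>
    (r.reachable.one_lt_dist_of_ne_of_not_adj hab hnab).trans_le (dist_le r)
  have hcommon : ∀ z ∈ p.support, z ∈ q.support → z = a ∨ z = b := by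
    intro z hzp hzq
    rcases hpA z hzp with rfl | rfl | hzA
    · exact .inl rfl
    · exact .inr rfl
    rcases hqB z hzq with rfl | rfl | hzB
    · exact .inl rfl
    · exact .inr rfl
    exact absurd hzB (hAB.notMem_of_mem_left hzA)
  have hcycle : (p.append q).IsCycle := by
    refine hp.isCycle_append hq (fun z hzp hzq => ?_) (.inl (hlen p))
    have ha := (List.nodup_cons.1 (p.cons_tail_support ▸ hp.support_nodup)).1
    have hb := (List.nodup_cons.1 (q.cons_tail_support ▸ hq.support_nodup)).1
    rcases hcommon z (List.mem_of_mem_tail hzp) (List.mem_of_mem_tail hzq) with rfl | rfl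
    exacts [ha hzp, hb hzq]
  have hchordless : (p.append q).IsChordless := hpc.append hqc fun x hx y hy hxy => by
    by_contra! h
    obtain ⟨hxq, hyp⟩ := h
    have hxA : x ∈ A := by
      rcases hpA x hx with rfl | rfl | hxA
      exacts [absurd q.end_mem_support hxq, absurd q.start_mem_support hxq, hxA]
    have hyB : y ∈ B := by
      rcases hqB y hy with rfl | rfl | hyB
      exacts [absurd p.start_mem_support hyp, absurd p.end_mem_support hyp, hyB]
    exact hnadj x hxA y hyB hxy
  have hlt := hG.length_lt_four hcycle hchordless
  have hq2 := hlen q.reverse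
  rw [Walk.length_append] at hlt
  rw [Walk.length_reverse] at hq2
  have := hlen p
  omega

/-- The analogue of `dConnected` for the induced subgraph `G[W]`. -/
def DConnectedOn (G : SimpleGraph V) (d : ℕ) (W : Set V) : Prop :=
  d + 1 ≤ W.ncard ∧
    ∀ S : Set V, S.ncard < d → ∀ x ∈ W \ S, ∀ y ∈ W \ S, G.ReachableIn (W \ S) x y

theorem DConnectedOn.of_isClique_boundary {d : ℕ} {W W' T : Set V} (hW : DConnectedOn G d W)
    (hW' : W' ⊆ W) (hcard : d + 1 ≤ W'.ncard) (hT : G.IsClique T)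
    (hbd : ∀ a ∈ W', ∀ b ∈ W \ W', G.Adj a b → a ∈ T) : DConnectedOn G d W' :=
  ⟨hcard, fun S hS x hx y hy =>
    (hW.2 S hS x ⟨hW' hx.1, hx.2⟩ y ⟨hW' hy.1, hy.2⟩).of_isClique_boundary hT hbd hx.1 hy.1⟩

theorem IsChordal.isClique_of_minimal_separator (hG : IsChordal G) {W T : Set V} {x y : V}
    (hx : x ∈ W) (hy : y ∈ W) (hT : T ⊆ W \ {x, y}) (hsep : ¬ G.ReachableIn (W \ T) x y)
    (hmin : ∀ t ∈ T, G.ReachableIn (W \ (T \ {t})) x y) : G.IsClique T := by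
  set A := {z | G.ReachableIn (W \ T) x z}
  set B := {z | G.ReachableIn (W \ T) y z}
  have hxT : x ∈ W \ T := ⟨hx, fun h => (hT h).2 (by simp)⟩
  have hyT : y ∈ W \ T := ⟨hy, fun h => (hT h).2 (by simp)⟩
  have hnbr : ∀ t ∈ T, (∃ z ∈ A, G.Adj z t) ∧ (∃ z ∈ B, G.Adj z t) := by
    intro t ht
    have h : G.ReachableIn (insert t (W \ T)) x y := (hmin t ht).mono fun z hz => by
      by_cases hzt : z = t
      · exact .inl hzt
      · exact .inr ⟨hz.1, fun hzT => hz.2 ⟨hzT, hzt⟩⟩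
    exact ⟨h.exists_adj_of_insert hxT hsep,
      h.symm.exists_adj_of_insert hyT fun h' => hsep h'.symm⟩
  have hvia : ∀ {C : Set V} {a b a' b' : V}, G.ReachableIn C a' b' → G.Adj a a' →
      G.Adj b' b → G.ReachableIn (insert a (insert b C)) a b := by
    intro C a b a' b' h haa' hb'b
    have h' : G.ReachableIn (insert a (insert b C)) a' b' := h.mono fun z hz => .inr (.inr hz)
    exact ((ReachableIn.of_adj (by simp) h'.mem_left haa').trans h').adj_right hb'b
      (by simp)
  intro a ha b hb hab
  obtain ⟨⟨a₁, ha₁, haa₁⟩, ⟨a₂, ha₂, haa₂⟩⟩ := hnbr a ha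
  obtain ⟨⟨b₁, hb₁, hbb₁⟩, ⟨b₂, hb₂, hbb₂⟩⟩ := hnbr b hb
  refine hG.adj_of_reachableIn (A := A) (B := B)
    (Set.disjoint_left.2 fun z hzA hzB => hsep (hzA.trans hzB.symm))
    (fun z hz w hw hzw => hsep ((hz.adj_right hzw hw.mem_right).trans hw.symm)) hab ?_ ?_
  · exact hvia (ha₁.within_component.symm.trans hb₁.within_component) haa₁.symm hbb₁
  · exact hvia (ha₂.within_component.symm.trans hb₂.within_component) haa₂.symm hbb₂

theorem DConnectedOn.exists_clique_separator [Finite V] (hG : IsChordal G) {d : ℕ} {W : Set V}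
    (hW : DConnectedOn G d W) {x y : V} (hx : x ∈ W) (hy : y ∈ W) (hxy : x ≠ y)
    (hnadj : ¬ G.Adj x y) :
    ∃ T ⊆ W \ {x, y}, ¬ G.ReachableIn (W \ T) x y ∧ d ≤ T.ncard ∧ G.IsClique T := by
  obtain ⟨T, hT, hsep, hmin⟩ := exists_minimal_separator (W := W) hxy hnadj
  refine ⟨T, hT, hsep, ?_, ?_⟩
  · by_contra! hlt
    exact hsep (hW.2 T hlt x ⟨hx, fun h => (hT h).2 (by simp)⟩
      y ⟨hy, fun h => (hT h).2 (by simp)⟩)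
  · exact hG.isClique_of_minimal_separator hx hy hT hsep hmin

theorem DConnectedOn.exists_split [Finite V] (hG : IsChordal G) {d : ℕ} {W : Set V}
    (hW : DConnectedOn G d W) {x y : V} (hx : x ∈ W) (hy : y ∈ W) (hxy : x ≠ y)
    (hnadj : ¬ G.Adj x y) :
    ∃ W₁ W₂ : Set V, W₁ ⊂ W ∧ W₂ ⊂ W ∧ W₁ ∪ W₂ = W ∧ d ≤ (W₁ ∩ W₂).ncard ∧
      DConnectedOn G d W₁ ∧ DConnectedOn G d W₂ ∧
      ∀ u ∈ W, ∀ v ∈ W, G.Adj u v → (u ∈ W₁ ∧ v ∈ W₁) ∨ (u ∈ W₂ ∧ v ∈ W₂) := by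
  obtain ⟨T, hT, hsep, hdT, hclique⟩ := hW.exists_clique_separator hG hx hy hxy hnadj
  have hTW : T ⊆ W := fun t ht => (hT ht).1
  have hyT : y ∉ T := fun h => (hT h).2 (by simp)
  set A := {z | G.ReachableIn (W \ T) x z}
  have hxA : x ∈ A := ReachableIn.refl ⟨hx, fun h => (hT h).2 (by simp)⟩
  have hyA : y ∉ A := hsep
  have hA : A ⊆ W \ T := fun z hz => hz.mem_right
  have hAclosed : ∀ a ∈ A, ∀ b ∈ W \ T, G.Adj a b → b ∈ A := fun a ha b hb hab =>
    ReachableIn.adj_right ha hab hb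
  have hW₁ : A ∪ T ⊆ W := Set.union_subset (fun z hz => (hA hz).1) hTW
  have hinter : (A ∪ T) ∩ (W \ A) = T := by
    ext z
    constructor
    · rintro ⟨hz | hz, -, hzA⟩
      exacts [absurd hz hzA, hz]
    · exact fun hz => ⟨.inr hz, hTW hz, fun hzA => (hA hzA).2 hz⟩
  refine ⟨A ∪ T, W \ A, ?_, ?_, ?_, by rw [hinter]; exact hdT, ?_, ?_,
    fun u hu v hv huv => huv.mem_union_or_mem_sdiff hAclosed hu hv⟩
  · exact (Set.ssubset_iff_of_subset hW₁).2 ⟨y, hy, fun h => h.elim hyA hyT⟩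
  · exact (Set.ssubset_iff_of_subset Set.sdiff_subset).2 ⟨x, hx, fun h => h.2 hxA⟩
  · exact Set.union_sdiff_cancel' Set.subset_union_left hW₁
  · refine hW.of_isClique_boundary hW₁ ?_ hclique fun a ha b ⟨hb, hbW₁⟩ hab => ?_
    · rw [Set.ncard_union_eq (Set.disjoint_left.2 fun z hz => (hA hz).2)]
      have := (Set.ncard_pos (s := A)).2 ⟨x, hxA⟩
      omega
    · rcases hab.mem_union_or_mem_sdiff hAclosed (hW₁ ha) hb with ⟨-, hb⟩ | ⟨⟨-, haA⟩, -⟩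
      exacts [absurd hb hbW₁, ha.resolve_left haA]
  · refine hW.of_isClique_boundary Set.sdiff_subset ?_ hclique fun a ha b ⟨hb, hbA⟩ hab => ?_
    · have hsub : insert y T ⊆ W \ A :=
        Set.insert_subset ⟨hy, hyA⟩ fun t ht => ⟨hTW ht, fun htA => (hA htA).2 ht⟩
      have := Set.ncard_le_ncard hsub
      rw [Set.ncard_insert_of_notMem hyT] at this
      omega
    · rcases hab.mem_union_or_mem_sdiff hAclosed ha.1 hb with ⟨ha', -⟩ | ⟨-, hb'⟩
      exacts [ha'.resolve_left ha.2, absurd hb' hbA]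

theorem globallyRigidGraph_of_forall_adj {W : Type*} {H : SimpleGraph W}
    (hH : ∀ a b, a ≠ b → H.Adj a b) (d : ℕ) : GloballyRigidGraph H d := by
  intro p _ q hq a b
  rcases eq_or_ne a b with rfl | hab
  · simp
  · exact hq a b (hH a b hab)

theorem IsChordal.gluingConstr_induce [Finite V] (hG : IsChordal G) {d : ℕ} {W : Set V}
    (hW : DConnectedOn G d W) : GluingConstr G d ((⊤ : G.Subgraph).induce W) := by
  induction hn : W.ncard using Nat.strong_induction_on generalizing W with
  | _ n ih =>
  by_cases hclique : G.IsClique W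
  · refine .base _ (by simpa using hW.1) (globallyRigidGraph_of_forall_adj ?_ d)
    exact fun a b hab => ⟨a.2, b.2, hclique a.2 b.2 (Subtype.coe_ne_coe.2 hab)⟩
  obtain ⟨x, hx, y, hy, hxy, hnadj⟩ : ∃ x ∈ W, ∃ y ∈ W, x ≠ y ∧ ¬ G.Adj x y := by
    simpa [IsClique, Set.Pairwise] using hclique
  obtain ⟨W₁, W₂, hW₁, hW₂, hunion, hinter, hdW₁, hdW₂, hedges⟩ :=
    hW.exists_split hG hx hy hxy hnadj
  have hglue := GluingConstr.glue _ _ (ih _ (hn ▸ Set.ncard_lt_ncard hW₁) hdW₁ rfl)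
    (ih _ (hn ▸ Set.ncard_lt_ncard hW₂) hdW₂ rfl)
    (by simpa [hunion] using hW₁.ne) (by simpa [hunion] using hW₂.ne) (by simpa using hinter)
  rwa [Subgraph.induce_top_sup_induce_top (hunion ▸ hedges), hunion] at hglue

theorem dConnected.dConnectedOn_univ [Fintype V] {d : ℕ} (h : dConnected G d) :
    DConnectedOn G d Set.univ := by
  refine ⟨by simpa [Set.ncard_univ] using h.1, fun S hS x hx y hy => ?_⟩
  have hsep := h.2 S hS
  simp only [IsSeparator, not_exists, not_and, not_not] at hsep
  obtain ⟨hx', hy', hxy⟩ := hsep x y hx.2 hy.2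
  simpa [Set.compl_eq_univ_sdiff] using (ReachableIn.iff_reachable_induce hx' hy').2 hxy

end

theorem stmt16_general [Fintype V] (G : SimpleGraph V) (d : ℕ)
    (hconn : dConnected G d) (hchordal : IsChordal G) :
    GluingConstr G d ⊤ := by
  have h := hchordal.gluingConstr_induce hconn.dConnectedOn_univ
  rwa [← SimpleGraph.Subgraph.verts_top, SimpleGraph.Subgraph.induce_self_verts] at h

theorem stmt16 [Fintype V] (G : SimpleGraph V) (d : ℕ)
    (hconn : dConnected G d) (hchordal : IsChordal G)
    (hcard : d + 1 ≤ Fintype.card V) :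
    GluingConstr G d ⊤ :=
  stmt16_general G d hconn hchordal
end
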